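/- arXiv:1109.0466 — 2 statements merged into one kernel-verified Lean document; each statement's English description precedes it below -/
import Mathlib

section
/- Let 1 ≤ n < d be integers and let A : ℝⁿ → ℝ^{d−n} be a Lipschitz function with Lipschitz constant Lip(A) < 1, and let Γ = {(y, A(y)) : y ∈ ℝⁿ} ⊂ ℝ^d be its graph. Then there exists C > 0, depending only on n, d and Lip(A), such that for every z ∈ Γ and all 0 < a ≤ b: H^n( Γ ∩ {y ∈ ℝ^d : a ≤ |y − z| ≤ b} ) ≤ C (b − a) b^{n−1}, where H^n is n-dimensional Hausdorff measure. -/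
open MeasureTheory Metric Set
open scoped ENNReal NNReal

noncomputable section

abbrev Rd (d : ℕ) := EuclideanSpace ℝ (Fin d)

/-- The support of a Borel measure on `ℝ^d`. -/
def msupport {d : ℕ} (μ : Measure (Rd d)) : Set (Rd d) :=
  {x | ∀ r : ℝ, 0 < r → 0 < μ (ball x r)}

/-- `μ` is an `n`-dimensional Ahlfors–David regular measure. -/
def IsADRegular {d : ℕ} (n : ℕ) (μ : Measure (Rd d)) : Prop :=
  ∃ C : ℝ, 0 < C ∧ ∀ x ∈ msupport μ, ∀ r : ℝ, 0 < r →
    ENNReal.ofReal r ≤ EMetric.diam (msupport μ) →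
    ENNReal.ofReal (C⁻¹ * r ^ n) ≤ μ (closedBall x r) ∧
      μ (closedBall x r) ≤ ENNReal.ofReal (C * r ^ n)

/-- `μ` is uniformly `n`-rectifiable. -/
def IsUnifRectifiable {d : ℕ} (n : ℕ) (μ : Measure (Rd d)) : Prop :=
  ∃ θ : ℝ, 0 < θ ∧ ∃ M : ℝ≥0, 0 < M ∧
    ∀ x ∈ msupport μ, ∀ r : ℝ, 0 < r →
      ENNReal.ofReal r ≤ EMetric.diam (msupport μ) →
      ∃ g : EuclideanSpace ℝ (Fin n) → Rd d, LipschitzWith M g ∧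
        ENNReal.ofReal (θ * r ^ n) ≤
          μ (ball x r ∩ g '' ball (0 : EuclideanSpace ℝ (Fin n)) r)

/-- An admissible odd Calderón–Zygmund kernel of homogeneity `-n` on `ℝ^d`. -/
structure AdmissibleKernel {d : ℕ} (n : ℕ) (K : Rd d → ℝ) : Prop where
  odd : ∀ x : Rd d, x ≠ 0 → K (-x) = -K x
  smooth : ContDiffOn ℝ 2 K {(0 : Rd d)}ᶜ
  bounds : ∃ C : ℝ, 0 < C ∧ ∀ x : Rd d, x ≠ 0 →
    |K x| ≤ C / ‖x‖ ^ n ∧ ‖fderiv ℝ K x‖ ≤ C / ‖x‖ ^ (n + 1) ∧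
      ‖fderiv ℝ (fderiv ℝ K) x‖ ≤ C / ‖x‖ ^ (n + 2)

/-- An admissible truncation profile `φ_ℝ`. -/
structure TruncProfile (φ : ℝ → ℝ) : Prop where
  smooth : ContDiffOn ℝ 2 φ (Ici 0)
  mono : MonotoneOn φ (Ici 0)
  nonneg : ∀ t : ℝ, 0 ≤ t → 0 ≤ φ t
  le_one : ∀ t : ℝ, 0 ≤ t → φ t ≤ 1
  eq_zero : ∀ t : ℝ, 0 ≤ t → t < 1 / 4 → φ t = 0
  one_le : ∀ t : ℝ, 4 ≤ t → 1 ≤ φ t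
  deriv_lb : ∃ c : ℝ, 0 < c ∧ ∀ t ∈ Icc (1 / 3 : ℝ) 3, c ≤ |deriv φ t|

/-- The `ρ`-variation of a family `{F_ε}_{ε>0}` (evaluated at a point). -/
def varFam {E : Type*} [NormedAddCommGroup E] (ρ : ℝ) (F : ℝ → E) : ℝ≥0∞ :=
  ⨆ (ε : ℤ → ℝ) (_ : StrictAnti ε) (_ : ∀ m : ℤ, 0 < ε m),
    (∑' m : ℤ, ENNReal.ofReal ‖F (ε (m + 1)) - F (ε m)‖ ^ ρ) ^ (1 / ρ)

/-- Sharply truncated singular integral `T_ε^μ f`. -/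
def truncT {d : ℕ} (K : Rd d → ℝ) (μ : Measure (Rd d)) (f : Rd d → ℝ) (ε : ℝ)
    (x : Rd d) : ℝ :=
  ∫ y in {y : Rd d | ε < dist x y}, K (x - y) * f y ∂μ

/-- The `n`-dimensional Riesz kernel `x/|x|^{n+1}`. -/
def rieszK {d : ℕ} (n : ℕ) (x : Rd d) : Rd d := (‖x‖ ^ (n + 1))⁻¹ • x

/-- Sharply truncated Riesz transform `R_ε^μ f`. -/
def truncR {d : ℕ} (n : ℕ) (μ : Measure (Rd d)) (f : Rd d → ℝ) (ε : ℝ) (x : Rd d) : Rd d :=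
  ∫ y in {y : Rd d | ε < dist x y}, f y • rieszK n (x - y) ∂μ

/-- Smoothly truncated singular integral `T_{φ_ε}^μ f`. -/
def smoothT {d : ℕ} (K : Rd d → ℝ) (φ : ℝ → ℝ) (μ : Measure (Rd d)) (f : Rd d → ℝ)
    (ε : ℝ) (x : Rd d) : ℝ :=
  ∫ y, φ (‖x - y‖ ^ 2 / ε ^ 2) * K (x - y) * f y ∂μ

/-- Smoothly truncated Riesz transform `T_{φ_ε}^μ f` with `K(x)=x/|x|^{n+1}`. -/
def smoothR {d : ℕ} (n : ℕ) (φ : ℝ → ℝ) (μ : Measure (Rd d)) (f : Rd d → ℝ)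
    (ε : ℝ) (x : Rd d) : Rd d :=
  ∫ y, (φ (‖x - y‖ ^ 2 / ε ^ 2) * f y) • rieszK n (x - y) ∂μ

/-- Smoothly truncated singular integral `T_{φ_ε}ν` of a finite signed measure `ν`. -/
def smoothTM {d : ℕ} (K : Rd d → ℝ) (φ : ℝ → ℝ) (ν : SignedMeasure (Rd d)) (ε : ℝ)
    (x : Rd d) : ℝ :=
  (∫ y, φ (‖x - y‖ ^ 2 / ε ^ 2) * K (x - y) ∂ν.toJordanDecomposition.posPart) -
    ∫ y, φ (‖x - y‖ ^ 2 / ε ^ 2) * K (x - y) ∂ν.toJordanDecomposition.negPart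

/-- Total variation norm `‖ν‖` of a finite signed measure. -/
def tvNorm {d : ℕ} (ν : SignedMeasure (Rd d)) : ℝ≥0∞ :=
  ν.totalVariation Set.univ

/-- The graph map `y ↦ (y, A(y))` of `A : ℝ^n → ℝ^{d-n}` inside `ℝ^d`. -/
def graphFun {d : ℕ} (n : ℕ) (A : EuclideanSpace ℝ (Fin n) → EuclideanSpace ℝ (Fin (d - n)))
    (y : EuclideanSpace ℝ (Fin n)) : Rd d :=
  (WithLp.equiv 2 (∀ _ : Fin d, ℝ)).symm fun i =>
    if hi : (i : ℕ) < n then y ⟨(i : ℕ), hi⟩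
    else A y ⟨(i : ℕ) - n, by have := i.isLt; omega⟩

/-- `Γ` is an `n`-dimensional Lipschitz graph in `ℝ^d` with maximal slope at most `L`. -/
def IsLipschitzGraph {d : ℕ} (n : ℕ) (L : ℝ≥0) (Γ : Set (Rd d)) : Prop :=
  ∃ (T : Rd d ≃ᵢ Rd d) (A : EuclideanSpace ℝ (Fin n) → EuclideanSpace ℝ (Fin (d - n))),
    LipschitzWith L A ∧ Γ = T '' Set.range (graphFun n A)

/-!
Write `z = (y₀, A y₀)` and push every `y ∈ ℝⁿ` along the ray from `y₀` until its distance to `y₀`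
equals `|(y, A y) - z|`. This radial map sends the parameters of `Γ ∩ A(z, a, b)` into the flat
annulus `A(y₀, a, b) ⊂ ℝⁿ`, of measure `(bⁿ - aⁿ) ωₙ ≤ n (b - a) bⁿ⁻¹ ωₙ`. Because `Lip(A) < 1`
the radial map is anti-Lipschitz, with constant `3 / (1 - Lip(A)²)`, and the graph map is
`(1 + Lip(A))`-Lipschitz, so Hausdorff measure carries the bound over to `Γ`.
-/

theorem one_sub_sq_mul_le_three_mul {L D P T : ℝ} (hD : 0 ≤ D) (hP : 0 ≤ P)
    (hT : |T| ≤ 2 * P + L ^ 2 * D) (hDT : D ^ 2 ≤ T ^ 2 + P ^ 2) :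
    (1 - L ^ 2) * D ≤ 3 * P := by
  by_contra! h
  have hc : 0 < 1 - L ^ 2 := by nlinarith
  have hD₀ : 0 < D := by nlinarith
  have hX : 2 * P + L ^ 2 * D < (1 - (1 - L ^ 2) / 3) * D := by linarith
  have hT2 : T ^ 2 < ((1 - (1 - L ^ 2) / 3) * D) ^ 2 := by
    rw [← sq_abs T]; exact pow_lt_pow_left₀ (hT.trans_lt hX) (abs_nonneg T) two_ne_zero
  have hP2 : P ^ 2 < ((1 - L ^ 2) * D / 3) ^ 2 := pow_lt_pow_left₀ (by linarith) hP two_ne_zero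
  have : 0 < D ^ 2 * ((1 - L ^ 2) * (3 - (1 - L ^ 2))) := by
    have : 0 < 3 - (1 - L ^ 2) := by nlinarith
    positivity
  nlinarith

theorem abs_sub_le_of_sq_eq_add_sq {L D t₁ t₂ u₁ u₂ s₁ s₂ : ℝ} (hL₀ : 0 ≤ L) (hL₁ : L ≤ 1)
    (hD : 0 ≤ D) (ht₁ : 0 ≤ t₁) (ht₂ : 0 ≤ t₂) (hu₁ : 0 ≤ u₁) (hu₂ : 0 ≤ u₂)
    (hs₁ : 0 ≤ s₁) (hs₂ : 0 ≤ s₂) (hs₁t : s₁ ^ 2 = t₁ ^ 2 + u₁ ^ 2)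
    (hs₂t : s₂ ^ 2 = t₂ ^ 2 + u₂ ^ 2) (hu₁t : u₁ ≤ L * t₁) (hu₂t : u₂ ≤ L * t₂)
    (hu : |u₁ - u₂| ≤ L * D) :
    |t₁ - t₂| ≤ 2 * |s₁ - s₂| + L ^ 2 * D := by
  have hs₁' : s₁ ≤ 2 * t₁ := by
    have : u₁ ≤ t₁ := hu₁t.trans (mul_le_of_le_one_left ht₁ hL₁)
    nlinarith [mul_le_mul this this hu₁ ht₁]
  have hs₂' : s₂ ≤ 2 * t₂ := by
    have : u₂ ≤ t₂ := hu₂t.trans (mul_le_of_le_one_left ht₂ hL₁)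
    nlinarith [mul_le_mul this this hu₂ ht₂]
  have key : |t₁ - t₂| * (t₁ + t₂) ≤ (2 * |s₁ - s₂| + L ^ 2 * D) * (t₁ + t₂) :=
    calc |t₁ - t₂| * (t₁ + t₂) = |(s₁ - s₂) * (s₁ + s₂) - (u₁ - u₂) * (u₁ + u₂)| := by
          rw [← abs_of_nonneg (add_nonneg ht₁ ht₂), ← abs_mul]
          congr 1
          linear_combination hs₂t - hs₁t
      _ ≤ |s₁ - s₂| * (s₁ + s₂) + |u₁ - u₂| * (u₁ + u₂) := by
          refine (abs_sub _ _).trans ?_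
          rw [abs_mul, abs_mul, abs_of_nonneg (add_nonneg hs₁ hs₂),
            abs_of_nonneg (add_nonneg hu₁ hu₂)]
      _ ≤ |s₁ - s₂| * (2 * (t₁ + t₂)) + L * D * (L * (t₁ + t₂)) := by
          gcongr <;> linarith
      _ = (2 * |s₁ - s₂| + L ^ 2 * D) * (t₁ + t₂) := by ring
  rcases (add_nonneg ht₁ ht₂).eq_or_lt with h | h
  · obtain rfl : t₁ = 0 := by linarith
    obtain rfl : t₂ = 0 := by linarith
    simp only [sub_zero, abs_zero]
    positivity
  · exact le_of_mul_le_mul_right key h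

section RadialScale

variable {E F : Type*} [NormedAddCommGroup E] [InnerProductSpace ℝ E] [NormedAddCommGroup F]

theorem norm_smul_sub_smul_sq_sub_sq {c₁ c₂ : ℝ} (hc₁ : 0 ≤ c₁) (hc₂ : 0 ≤ c₂) (v₁ v₂ : E) :
    ‖c₁ • v₁ - c₂ • v₂‖ ^ 2 - (‖c₁ • v₁‖ - ‖c₂ • v₂‖) ^ 2 =
      c₁ * c₂ * (‖v₁ - v₂‖ ^ 2 - (‖v₁‖ - ‖v₂‖) ^ 2) := by
  simp only [norm_sub_sq_real, norm_smul, real_inner_smul_left, real_inner_smul_right,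
    Real.norm_of_nonneg hc₁, Real.norm_of_nonneg hc₂]
  ring

def radialScale (v : E) (w : F) : E := (√(‖v‖ ^ 2 + ‖w‖ ^ 2) / ‖v‖) • v

theorem norm_radialScale {L : ℝ} {v : E} {w : F} (hw : ‖w‖ ≤ L * ‖v‖) :
    ‖radialScale v w‖ = √(‖v‖ ^ 2 + ‖w‖ ^ 2) := by
  rcases eq_or_ne v 0 with rfl | hv
  · have : ‖w‖ = 0 := le_antisymm (by simpa using hw) (norm_nonneg w)
    simp [radialScale, this]
  · rw [radialScale, norm_smul, Real.norm_of_nonneg (by positivity),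
      div_mul_cancel₀ _ (norm_ne_zero_iff.2 hv)]

/- With `tᵢ = ‖vᵢ‖`, `sᵢ = ‖radialScale vᵢ wᵢ‖`, `D = ‖v₁ - v₂‖` and `P` the norm on the right:
`|s₁ - s₂| ≤ P`; rescaling the `vᵢ` by factors `cᵢ ≥ 1` multiplies `D² - (t₁ - t₂)²` by `c₁ c₂`, so
`D² ≤ (t₁ - t₂)² + P²`; and `tᵢ² = sᵢ² - ‖wᵢ‖²` gives `|t₁ - t₂| ≤ 2 |s₁ - s₂| + L² D`. -/
theorem one_sub_sq_mul_norm_sub_le_norm_radialScale_sub {L : ℝ} (hL₀ : 0 ≤ L) (hL₁ : L ≤ 1)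
    {v₁ v₂ : E} {w₁ w₂ : F} (hw₁ : ‖w₁‖ ≤ L * ‖v₁‖) (hw₂ : ‖w₂‖ ≤ L * ‖v₂‖)
    (hw : ‖w₁ - w₂‖ ≤ L * ‖v₁ - v₂‖) :
    (1 - L ^ 2) * ‖v₁ - v₂‖ ≤ 3 * ‖radialScale v₁ w₁ - radialScale v₂ w₂‖ := by
  set c₁ := √(‖v₁‖ ^ 2 + ‖w₁‖ ^ 2) / ‖v₁‖
  set c₂ := √(‖v₂‖ ^ 2 + ‖w₂‖ ^ 2) / ‖v₂‖
  have hnorm₁ : ‖c₁ • v₁‖ = √(‖v₁‖ ^ 2 + ‖w₁‖ ^ 2) := norm_radialScale hw₁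
  have hnorm₂ : ‖c₂ • v₂‖ = √(‖v₂‖ ^ 2 + ‖w₂‖ ^ 2) := norm_radialScale hw₂
  have hP : ‖radialScale v₁ w₁ - radialScale v₂ w₂‖ = ‖c₁ • v₁ - c₂ • v₂‖ := rfl
  have hS : |√(‖v₁‖ ^ 2 + ‖w₁‖ ^ 2) - √(‖v₂‖ ^ 2 + ‖w₂‖ ^ 2)| ≤ ‖c₁ • v₁ - c₂ • v₂‖ :=
    hnorm₁ ▸ hnorm₂ ▸ abs_norm_sub_norm_le _ _
  have hT : |‖v₁‖ - ‖v₂‖| ≤ 2 * ‖c₁ • v₁ - c₂ • v₂‖ + L ^ 2 * ‖v₁ - v₂‖ := by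
    refine (abs_sub_le_of_sq_eq_add_sq hL₀ hL₁ (norm_nonneg _) (norm_nonneg _)
      (norm_nonneg _) (norm_nonneg _) (norm_nonneg _) (Real.sqrt_nonneg _) (Real.sqrt_nonneg _)
      (Real.sq_sqrt (by positivity)) (Real.sq_sqrt (by positivity)) hw₁ hw₂
      ((abs_norm_sub_norm_le w₁ w₂).trans hw)).trans ?_
    linarith
  have hgap₀ : 0 ≤ ‖v₁ - v₂‖ ^ 2 - (‖v₁‖ - ‖v₂‖) ^ 2 := by
    rw [sub_nonneg, ← sq_abs (‖v₁‖ - ‖v₂‖)]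
    exact pow_le_pow_left₀ (abs_nonneg _) (abs_norm_sub_norm_le v₁ v₂) 2
  have hgap : ‖v₁ - v₂‖ ^ 2 - (‖v₁‖ - ‖v₂‖) ^ 2 ≤
      c₁ * c₂ * (‖v₁ - v₂‖ ^ 2 - (‖v₁‖ - ‖v₂‖) ^ 2) := by
    have one_le_coeff {v : E} (hv : v ≠ 0) (w : F) : 1 ≤ √(‖v‖ ^ 2 + ‖w‖ ^ 2) / ‖v‖ :=
      (one_le_div (norm_pos_iff.2 hv)).2 <|
        (Real.le_sqrt (norm_nonneg v) (by positivity)).2 (le_add_of_nonneg_right (by positivity))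
    rcases eq_or_ne v₁ 0 with h₁ | h₁
    · simp [h₁]
    rcases eq_or_ne v₂ 0 with h₂ | h₂
    · simp [h₂]
    exact le_mul_of_one_le_left hgap₀ (one_le_mul_of_one_le_of_one_le
      (one_le_coeff h₁ w₁) (one_le_coeff h₂ w₂))
  have hDT : ‖v₁ - v₂‖ ^ 2 ≤ (‖v₁‖ - ‖v₂‖) ^ 2 + ‖c₁ • v₁ - c₂ • v₂‖ ^ 2 := by
    have hid := norm_smul_sub_smul_sq_sub_sq (c₁ := c₁) (c₂ := c₂) (by positivity)
      (by positivity) v₁ v₂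
    rw [hnorm₁, hnorm₂] at hid
    nlinarith [sq_nonneg (√(‖v₁‖ ^ 2 + ‖w₁‖ ^ 2) - √(‖v₂‖ ^ 2 + ‖w₂‖ ^ 2))]
  rw [hP]
  exact one_sub_sq_mul_le_three_mul (norm_nonneg _) (norm_nonneg _) hT hDT

def radialLift (f : E → F) (y₀ y : E) : E := y₀ + radialScale (y - y₀) (f y - f y₀)

theorem dist_radialLift {f : E → F} {L : ℝ≥0} (hf : LipschitzWith L f) (y₀ y : E) :
    dist (radialLift f y₀ y) y₀ = √(‖y - y₀‖ ^ 2 + ‖f y - f y₀‖ ^ 2) := by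
  rw [radialLift, dist_eq_norm, add_sub_cancel_left, norm_radialScale (L := L)]
  simpa only [dist_eq_norm] using hf.dist_le_mul y y₀

theorem antilipschitzWith_radialLift {f : E → F} {L : ℝ≥0} (hf : LipschitzWith L f) (hL : L < 1)
    (y₀ : E) : AntilipschitzWith (3 / (1 - (L : ℝ) ^ 2)).toNNReal (radialLift f y₀) := by
  have hL₁ : (L : ℝ) < 1 := hL
  have hc : 0 < 1 - (L : ℝ) ^ 2 := by nlinarith [L.coe_nonneg]
  have hf' (y y' : E) : ‖f y - f y'‖ ≤ L * ‖y - y'‖ := by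
    simpa only [dist_eq_norm] using hf.dist_le_mul y y'
  refine AntilipschitzWith.of_le_mul_dist fun y₁ y₂ => ?_
  rw [Real.coe_toNNReal _ (by positivity), dist_eq_norm, dist_eq_norm, div_mul_eq_mul_div,
    le_div_iff₀ hc, mul_comm, radialLift, radialLift, add_sub_add_left_eq_sub,
    ← sub_sub_sub_cancel_right y₁ y₂ y₀]
  refine one_sub_sq_mul_norm_sub_le_norm_radialScale_sub L.coe_nonneg hL₁.le (hf' _ _) (hf' _ _) ?_
  rw [sub_sub_sub_cancel_right, sub_sub_sub_cancel_right]
  exact hf' _ _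

end RadialScale

theorem addHaar_closedBall_sdiff_ball_le {E : Type*} [NormedAddCommGroup E] [NormedSpace ℝ E]
    [MeasurableSpace E] [BorelSpace E] [FiniteDimensional ℝ E] (μ : Measure E)
    [μ.IsAddHaarMeasure] (x : E) {a b : ℝ} (ha : 0 < a) (hab : a ≤ b) :
    μ (closedBall x b \ ball x a) ≤
      ENNReal.ofReal (Module.finrank ℝ E * (b - a) * b ^ (Module.finrank ℝ E - 1)) *
        μ (ball 0 1) := by
  rw [measure_sdiff (ball_subset_closedBall.trans (closedBall_subset_closedBall hab))
      measurableSet_ball.nullMeasurableSet measure_ball_lt_top.ne,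
    Measure.addHaar_closedBall μ x (ha.le.trans hab), Measure.addHaar_ball_of_pos μ x ha,
    ← ENNReal.sub_mul fun _ _ => measure_ball_lt_top.ne,
    ← ENNReal.ofReal_sub _ (by positivity)]
  gcongr
  have := abs_pow_sub_pow_le b a (Module.finrank ℝ E)
  rw [abs_of_nonneg (sub_nonneg.2 hab), abs_of_nonneg (ha.le.trans hab), abs_of_pos ha,
    max_eq_left hab] at this
  exact (le_abs_self _).trans (this.trans_eq (by ring))

instance isAddHaarMeasure_hausdorffMeasure_euclideanSpace (n : ℕ) :
    (μH[(n : ℝ)] : Measure (EuclideanSpace ℝ (Fin n))).IsAddHaarMeasure := by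
  simpa using isAddHaarMeasure_hausdorffMeasure (E := EuclideanSpace ℝ (Fin n))

theorem norm_graphFun_sub_sq {n d : ℕ} (hnd : n ≤ d)
    (A : EuclideanSpace ℝ (Fin n) → EuclideanSpace ℝ (Fin (d - n)))
    (y y' : EuclideanSpace ℝ (Fin n)) :
    ‖graphFun n A y - graphFun n A y'‖ ^ 2 = ‖y - y'‖ ^ 2 + ‖A y - A y'‖ ^ 2 := by
  simp only [EuclideanSpace.norm_sq_eq, Real.norm_eq_abs, sq_abs]
  rw [← (finSumFinEquiv.trans (finCongr (Nat.add_sub_cancel' hnd))).sum_comp,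
    Fintype.sum_sum_type]
  congr 1
  · refine Finset.sum_congr rfl fun i _ => ?_
    simp [graphFun]
  · refine Finset.sum_congr rfl fun j _ => ?_
    simp [graphFun]

theorem dist_graphFun {n d : ℕ} (hnd : n ≤ d)
    (A : EuclideanSpace ℝ (Fin n) → EuclideanSpace ℝ (Fin (d - n)))
    (y y' : EuclideanSpace ℝ (Fin n)) :
    dist (graphFun n A y) (graphFun n A y') = √(‖y - y'‖ ^ 2 + ‖A y - A y'‖ ^ 2) := by
  rw [dist_eq_norm, ← norm_graphFun_sub_sq hnd, Real.sqrt_sq (norm_nonneg _)]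

theorem lipschitzWith_graphFun {n d : ℕ} (hnd : n ≤ d) {L : ℝ≥0}
    {A : EuclideanSpace ℝ (Fin n) → EuclideanSpace ℝ (Fin (d - n))} (hA : LipschitzWith L A) :
    LipschitzWith (1 + L) (graphFun n A) := by
  refine LipschitzWith.of_dist_le_mul fun y y' => ?_
  have hAyy' : ‖A y - A y'‖ ≤ L * ‖y - y'‖ := by
    simpa only [dist_eq_norm] using hA.dist_le_mul y y'
  rw [dist_graphFun hnd, dist_eq_norm, NNReal.coe_add, NNReal.coe_one]
  refine Real.sqrt_le_iff.2 ⟨by positivity, ?_⟩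
  nlinarith [norm_nonneg (y - y'), norm_nonneg (A y - A y')]

theorem hausdorffMeasure_range_graphFun_inter_annulus_le {n d : ℕ} (hnd : n ≤ d) {L : ℝ≥0}
    (hL : L < 1) {A : EuclideanSpace ℝ (Fin n) → EuclideanSpace ℝ (Fin (d - n))}
    (hA : LipschitzWith L A) (y₀ : EuclideanSpace ℝ (Fin n)) {a b : ℝ} (ha : 0 < a)
    (hab : a ≤ b) :
    μH[(n : ℝ)] (range (graphFun n A) ∩
        {y : Rd d | a ≤ dist y (graphFun n A y₀) ∧ dist y (graphFun n A y₀) ≤ b}) ≤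
      ((1 + L) ^ n * (3 / (1 - (L : ℝ) ^ 2)).toNNReal ^ n : ℝ≥0) *
        μH[(n : ℝ)] (ball (0 : EuclideanSpace ℝ (Fin n)) 1) *
        ENNReal.ofReal (n * (b - a) * b ^ (n - 1)) := by
  set S := {y : Rd d | a ≤ dist y (graphFun n A y₀) ∧ dist y (graphFun n A y₀) ≤ b}
  have hmaps : MapsTo (radialLift A y₀) (graphFun n A ⁻¹' S) (closedBall y₀ b \ ball y₀ a) := by
    rintro y ⟨hya, hyb⟩
    rw [dist_graphFun hnd] at hya hyb
    refine ⟨?_, ?_⟩ <;> simp only [mem_closedBall, mem_ball, not_lt, dist_radialLift hA] <;>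
      assumption
  calc μH[(n : ℝ)] (range (graphFun n A) ∩ S)
      = μH[(n : ℝ)] (graphFun n A '' (graphFun n A ⁻¹' S)) := by
        rw [image_preimage_eq_range_inter]
    _ ≤ ((1 + L : ℝ≥0) : ℝ≥0∞) ^ n * μH[(n : ℝ)] (graphFun n A ⁻¹' S) := by
        rw [← ENNReal.rpow_natCast]
        exact (lipschitzWith_graphFun hnd hA).hausdorffMeasure_image_le n.cast_nonneg _
    _ ≤ ((1 + L : ℝ≥0) : ℝ≥0∞) ^ n * (((3 / (1 - (L : ℝ) ^ 2)).toNNReal : ℝ≥0∞) ^ n *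
          μH[(n : ℝ)] (radialLift A y₀ '' (graphFun n A ⁻¹' S))) := by
        gcongr
        simpa only [ENNReal.rpow_natCast] using
          (antilipschitzWith_radialLift hA hL y₀).le_hausdorffMeasure_image n.cast_nonneg _
    _ ≤ ((1 + L : ℝ≥0) : ℝ≥0∞) ^ n * (((3 / (1 - (L : ℝ) ^ 2)).toNNReal : ℝ≥0∞) ^ n *
          (ENNReal.ofReal (n * (b - a) * b ^ (n - 1)) *
            μH[(n : ℝ)] (ball (0 : EuclideanSpace ℝ (Fin n)) 1))) := by
        gcongr
        refine (measure_mono hmaps.image_subset).trans ?_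
        simpa using addHaar_closedBall_sdiff_ball_le μH[(n : ℝ)] y₀ ha hab
    _ = _ := by
        simp only [ENNReal.coe_mul, ENNReal.coe_pow]
        ring

/-- For a Lipschitz graph `Γ = {(y,A(y))}` with `Lip(A) < 1`, the Hausdorff
measure of the intersection of `Γ` with the annulus `A(z,a,b)` is `≲ (b−a)b^{n−1}`. -/
theorem statement12 (n d : ℕ) (hn : 1 ≤ n) (hnd : n < d)
    (L : ℝ≥0) (hL : L < 1)
    (A : EuclideanSpace ℝ (Fin n) → EuclideanSpace ℝ (Fin (d - n)))
    (hA : LipschitzWith L A) :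
    ∃ C : ℝ, 0 < C ∧ ∀ z ∈ Set.range (graphFun n A), ∀ a b : ℝ, 0 < a → a ≤ b →
      μH[(n : ℝ)]
          (Set.range (graphFun n A) ∩ {y : Rd d | a ≤ dist y z ∧ dist y z ≤ b}) ≤
        ENNReal.ofReal (C * (b - a) * b ^ (n - 1)) := by
  set κ : ℝ≥0∞ := ((1 + L) ^ n * (3 / (1 - (L : ℝ) ^ 2)).toNNReal ^ n : ℝ≥0) *
    μH[(n : ℝ)] (ball (0 : EuclideanSpace ℝ (Fin n)) 1)
  have hκ : κ ≠ ⊤ := ENNReal.mul_ne_top ENNReal.coe_ne_top measure_ball_lt_top.ne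
  have hκ₀ : 0 < κ.toReal := by
    have : (L : ℝ) ^ 2 < 1 := by nlinarith [L.coe_nonneg, NNReal.coe_lt_coe.2 hL]
    refine ENNReal.toReal_pos ?_ hκ
    simp [κ, this, (measure_ball_pos _ _ one_pos).ne']
  refine ⟨κ.toReal * n, mul_pos hκ₀ (Nat.cast_pos.2 hn), ?_⟩
  rintro _ ⟨y₀, rfl⟩ a b ha hab
  refine (hausdorffMeasure_range_graphFun_inter_annulus_le hnd.le hL hA y₀ ha hab).trans_eq ?_
  rw [show κ.toReal * n * (b - a) * b ^ (n - 1) = κ.toReal * (n * (b - a) * b ^ (n - 1)) by ring,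
    ENNReal.ofReal_mul ENNReal.toReal_nonneg, ENNReal.ofReal_toReal hκ]

end
end

section
/- Let 1 ≤ n < d be integers, ρ ≥ 1, K an admissible odd kernel, and φ_ℝ an admissible truncation profile. There exists C > 0, depending only on n, d, K, φ_ℝ and ρ, such that for every finite signed Borel measure ν on ℝ^d with supp ν ⊂ B(z₀, r) for some z₀ ∈ ℝ^d and r > 0 and with ν(ℝ^d) = 0, and for every x ∈ ℝ^d with |x − z₀| ≥ 4r: V_ρ(T_φ ν)(x) ≤ C r ‖ν‖ |x − z₀|^{−n−1}, where ‖ν‖ is the total variation norm of ν. -/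
/-!
Since `ν(ℝ^d) = 0`, `T_{φ_ε}ν(x) = ∫ (k_ε(x - y) - k_ε(x - z₀)) dν(y)` with
`k_ε(z) = φ(|z|²/ε²) K(z)`. Fix `y ∈ B(z₀, r)` and put `z = x - y`, `w = x - z₀`,
`c = |z|²/|w|²` and `s = |w|²/ε²`. Then `k_ε(z) - k_ε(w) = φ(c s) K(z) - φ(s) K(w)`, a function
of `s` alone which is constant for `s ≤ 1/8` and for `s ≥ 8`, and on `[1/8, 8]` is Lipschitz with
constant `≲ |c - 1| |K(z)| + |K(z) - K(w)| ≲ r / |w|^{n+1}`. So its total variation in `ε` is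
`≲ r / |x - z₀|^{n+1}` uniformly in `y`; integrating against `|ν|` bounds the `1`-variation of
`ε ↦ T_{φ_ε}ν(x)`, which dominates the `ρ`-variation for `ρ ≥ 1`.
-/

open MeasureTheory Metric Set
open scoped ENNReal NNReal

noncomputable section

open MeasureTheory Metric Set
open scoped ENNReal NNReal

theorem ENNReal.tsum_rpow_rpow_one_div_le_tsum {ι : Type*} (a : ι → ℝ≥0∞) {ρ : ℝ} (hρ : 1 ≤ ρ) :
    (∑' i, a i ^ ρ) ^ (1 / ρ) ≤ ∑' i, a i := by
  have hρ0 : 0 < ρ := by linarith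
  set S := ∑' i, a i
  have hsplit : ∀ b : ℝ≥0∞, b ^ ρ = b * b ^ (ρ - 1) := fun b => by
    conv_lhs => rw [← add_sub_cancel 1 ρ]
    rw [ENNReal.rpow_add_of_nonneg _ _ zero_le_one (by linarith), ENNReal.rpow_one]
  suffices h : ∑' i, a i ^ ρ ≤ S ^ ρ by
    calc (∑' i, a i ^ ρ) ^ (1 / ρ) ≤ (S ^ ρ) ^ (1 / ρ) := by gcongr
      _ = S := by rw [← ENNReal.rpow_mul, mul_one_div_cancel hρ0.ne', ENNReal.rpow_one]
  calc ∑' i, a i ^ ρ = ∑' i, a i * a i ^ (ρ - 1) := by simp only [hsplit]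
    _ ≤ ∑' i, a i * S ^ (ρ - 1) := by
        gcongr with i
        exact ENNReal.le_tsum i
    _ = S ^ ρ := by rw [ENNReal.tsum_mul_right, hsplit]

theorem varFam_le_of_forall_sum_le {E : Type*} [NormedAddCommGroup E] {ρ : ℝ} (hρ : 1 ≤ ρ)
    {F : ℝ → E} {B : ℝ}
    (h : ∀ ε : ℤ → ℝ, Antitone ε → (∀ m, 0 < ε m) → ∀ t : Finset ℤ,
      ∑ m ∈ t, ‖F (ε (m + 1)) - F (ε m)‖ ≤ B) :
    varFam ρ F ≤ ENNReal.ofReal B := by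
  refine iSup₂_le fun ε hε => iSup_le fun hε0 => ?_
  refine (ENNReal.tsum_rpow_rpow_one_div_le_tsum _ hρ).trans ?_
  rw [ENNReal.tsum_eq_iSup_sum]
  refine iSup_le fun t => ?_
  rw [← ENNReal.ofReal_sum_of_nonneg fun m _ => norm_nonneg _]
  exact ENNReal.ofReal_le_ofReal (h ε hε.antitone hε0 t)

theorem eVariationOn.sum_le_of_monotone_int {α E : Type*} [LinearOrder α] [PseudoEMetricSpace E]
    (f : α → E) {s : Set α} {u : ℤ → α} (hu : Monotone u) (us : ∀ m, u m ∈ s) (t : Finset ℤ) :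
    ∑ m ∈ t, edist (f (u (m + 1))) (f (u m)) ≤ eVariationOn f s := by
  obtain ⟨R, hR⟩ : ∃ R : ℕ, ∀ m ∈ t, m.natAbs ≤ R := ⟨t.sup Int.natAbs, fun m => Finset.le_sup⟩
  have hsub : t ⊆ (Finset.range (2 * R + 1)).image fun i : ℕ => -(R : ℤ) + i := by
    intro m hm
    have := hR m hm
    simp only [Finset.mem_image, Finset.mem_range]
    exact ⟨(m + R).toNat, by omega, by omega⟩
  have hinj : Set.InjOn (fun i : ℕ => -(R : ℤ) + i) (Finset.range (2 * R + 1)) :=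
    fun i _ j _ hij => by simpa using hij
  calc ∑ m ∈ t, edist (f (u (m + 1))) (f (u m))
      ≤ ∑ m ∈ (Finset.range (2 * R + 1)).image (fun i : ℕ => -(R : ℤ) + i),
          edist (f (u (m + 1))) (f (u m)) := Finset.sum_le_sum_of_subset hsub
    _ = ∑ i ∈ Finset.range (2 * R + 1), edist (f (u (-R + ↑(i + 1)))) (f (u (-R + i))) := by
        rw [Finset.sum_image hinj]
        push_cast
        simp only [add_assoc]
    _ ≤ eVariationOn f s :=
        eVariationOn.sum_le (u := fun i : ℕ => u (-R + i)) (fun i j hij => hu (by omega))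
          fun i => us _

theorem eVariationOn_le_of_lipschitzOnWith_Icc {E : Type*} [PseudoEMetricSpace E] {f : ℝ → E}
    {s : Set ℝ} {a b : ℝ} (hab : a ≤ b) {L : ℝ≥0} (hf : LipschitzOnWith L f (Icc a b))
    (ha : ∀ t ∈ s, t ≤ a → f t = f a) (hb : ∀ t ∈ s, b ≤ t → f t = f b) :
    eVariationOn f s ≤ L * ENNReal.ofReal (b - a) := by
  set p : ℝ → ℝ := fun t => projIcc a b hab t
  have hfp : EqOn f (f ∘ p) s := fun t ht => by
    rcases le_total t a with hta | hta
    · simp [p, projIcc_of_le_left hab hta, ha t ht hta]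
    rcases le_total b t with hbt | hbt
    · simp [p, projIcc_of_right_le hab hbt, hb t ht hbt]
    · simp [p, projIcc_of_mem hab ⟨hta, hbt⟩]
  calc eVariationOn f s = eVariationOn (f ∘ p) s := eVariationOn.eq_of_eqOn hfp
    _ ≤ eVariationOn f (Icc a b) :=
        eVariationOn.comp_le_of_monotoneOn f p (fun x _ y _ hxy => monotone_projIcc hab hxy)
          fun t _ => (projIcc a b hab t).2
    _ = eVariationOn (f ∘ id) (Icc a b) := rfl
    _ ≤ L * eVariationOn id (Icc a b) := hf.comp_eVariationOn_le (mapsTo_id _)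
    _ = L * ENNReal.ofReal (b - a) := by rw [eVariationOn_id_Icc]

-- `[1/16, 16]` contains `c s` whenever `c ∈ [1/2, 2]` and `s ∈ [1/8, 8]`.
structure ProfileDerivBounds (φ φ' : ℝ → ℝ) (M : ℝ) : Prop where
  hasDerivAt : ∀ s ∈ Icc (1 / 16 : ℝ) 16, HasDerivAt φ (φ' s) s
  abs_deriv_le : ∀ s ∈ Icc (1 / 16 : ℝ) 16, |φ' s| ≤ M
  abs_deriv_sub_le : ∀ s ∈ Icc (1 / 16 : ℝ) 16, ∀ s' ∈ Icc (1 / 16 : ℝ) 16,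
    |φ' s - φ' s'| ≤ M * |s - s'|

theorem ProfileDerivBounds.nonneg {φ φ' : ℝ → ℝ} {M : ℝ} (hφ : ProfileDerivBounds φ φ' M) :
    0 ≤ M :=
  (abs_nonneg _).trans (hφ.abs_deriv_le 1 ⟨by norm_num, by norm_num⟩)

theorem ProfileDerivBounds.abs_sub_le {φ φ' : ℝ → ℝ} {M : ℝ} (hφ : ProfileDerivBounds φ φ' M)
    {s s' : ℝ} (hs : s ∈ Icc (1 / 16 : ℝ) 16) (hs' : s' ∈ Icc (1 / 16 : ℝ) 16) :
    |φ s - φ s'| ≤ M * |s - s'| := by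
  simpa only [Real.norm_eq_abs] using Convex.norm_image_sub_le_of_norm_hasDerivWithin_le
    (fun t ht => (hφ.hasDerivAt t ht).hasDerivWithinAt)
    (fun t ht => (hφ.abs_deriv_le t ht).trans_eq' rfl) (convex_Icc _ _) hs' hs

theorem TruncProfile.exists_profileDerivBounds {φ : ℝ → ℝ} (hφ : TruncProfile φ) :
    ∃ M : ℝ, 0 < M ∧ ProfileDerivBounds φ (deriv φ) M := by
  have hJ : Icc (1 / 16 : ℝ) 16 ⊆ Ioi 0 := fun s hs => lt_of_lt_of_le (by norm_num) hs.1
  have hφ2 : ContDiffOn ℝ 2 φ (Ioi 0) := hφ.smooth.mono Ioi_subset_Ici_self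
  have hφ1 : ContDiffOn ℝ 1 (deriv φ) (Icc (1 / 16 : ℝ) 16) :=
    (hφ2.deriv_of_isOpen isOpen_Ioi (by norm_num)).mono hJ
  obtain ⟨B, hB⟩ := isCompact_Icc.exists_bound_of_continuousOn hφ1.continuousOn
  obtain ⟨L, hL⟩ := hφ1.exists_lipschitzOnWith one_ne_zero (convex_Icc _ _) isCompact_Icc
  refine ⟨|B| + L + 1, by positivity, fun s hs => ?_, fun s hs => ?_, fun s hs s' hs' => ?_⟩
  · exact ((hφ2.differentiableOn (by norm_num)).differentiableAt
      (isOpen_Ioi.mem_nhds (hJ hs))).hasDerivAt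
  · have := hB s hs
    rw [Real.norm_eq_abs] at this
    linarith [le_abs_self B, L.2]
  · have := hL.dist_le_mul s hs s' hs'
    rw [Real.dist_eq, Real.dist_eq] at this
    nlinarith [abs_nonneg B, abs_nonneg (s - s')]

theorem abs_dilation_sub_sub_le {φ φ' : ℝ → ℝ} {M c : ℝ}
    (hφ : ProfileDerivBounds φ φ' M)
    (hc : c ∈ Icc (1 / 2 : ℝ) 2) {s s' : ℝ} (hs : s ∈ Icc (1 / 8 : ℝ) 8)
    (hs' : s' ∈ Icc (1 / 8 : ℝ) 8) :
    |(φ (c * s) - φ s) - (φ (c * s') - φ s')| ≤ 9 * M * |c - 1| * |s - s'| := by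
  have hJ : ∀ t ∈ Icc (1 / 8 : ℝ) 8, t ∈ Icc (1 / 16 : ℝ) 16 ∧ c * t ∈ Icc (1 / 16 : ℝ) 16 :=
    fun t ht => ⟨⟨by linarith [ht.1], by linarith [ht.2]⟩,
      ⟨by nlinarith [ht.1, hc.1], by nlinarith [ht.2, hc.2, ht.1, hc.1]⟩⟩
  have hderiv : ∀ t ∈ Icc (1 / 8 : ℝ) 8,
      HasDerivWithinAt (fun t => φ (c * t) - φ t) (φ' (c * t) * c - φ' t) (Icc (1 / 8) 8) t :=
    fun t ht => (((hφ.hasDerivAt _ (hJ t ht).2).comp t ((hasDerivAt_id t).const_mul c)).sub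
      (hφ.hasDerivAt t (hJ t ht).1) |>.congr_deriv (by simp)).hasDerivWithinAt
  have hbound : ∀ t ∈ Icc (1 / 8 : ℝ) 8, ‖φ' (c * t) * c - φ' t‖ ≤ 9 * M * |c - 1| := by
    intro t ht
    have hM := hφ.nonneg
    have h1 := hφ.abs_deriv_le _ (hJ t ht).2
    have h2 := hφ.abs_deriv_sub_le _ (hJ t ht).2 t (hJ t ht).1
    rw [show c * t - t = (c - 1) * t by ring, abs_mul] at h2
    have ht8 : |t| ≤ 8 := abs_le.2 ⟨by linarith [ht.1], ht.2⟩
    calc ‖φ' (c * t) * c - φ' t‖ = |(c - 1) * φ' (c * t) + (φ' (c * t) - φ' t)| := by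
          rw [Real.norm_eq_abs]; congr 1; ring
      _ ≤ |c - 1| * M + M * (|c - 1| * 8) := by
          refine (abs_add_le _ _).trans (add_le_add ?_ (h2.trans ?_))
          · rw [abs_mul]; gcongr
          · gcongr
      _ = 9 * M * |c - 1| := by ring
  have := Convex.norm_image_sub_le_of_norm_hasDerivWithin_le hderiv hbound (convex_Icc _ _) hs' hs
  simpa only [Real.norm_eq_abs] using this

theorem TruncProfile.eq_one {φ : ℝ → ℝ} (hφ : TruncProfile φ) {t : ℝ} (ht : 4 ≤ t) : φ t = 1 :=
  le_antisymm (hφ.le_one t (by linarith)) (hφ.one_le t ht)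

theorem abs_dilation_profile_sub_le {φ φ' : ℝ → ℝ} {M c : ℝ}
    (hφ : ProfileDerivBounds φ φ' M)
    (hc : c ∈ Icc (1 / 2 : ℝ) 2) (A B : ℝ) {s s' : ℝ} (hs : s ∈ Icc (1 / 8 : ℝ) 8)
    (hs' : s' ∈ Icc (1 / 8 : ℝ) 8) :
    |(φ (c * s) * A - φ s * B) - (φ (c * s') * A - φ s' * B)| ≤
      M * (9 * |c - 1| * |A| + |A - B|) * |s - s'| := by
  have hI : Icc (1 / 8 : ℝ) 8 ⊆ Icc (1 / 16) 16 := Icc_subset_Icc (by norm_num) (by norm_num)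
  have hφ_lip := hφ.abs_sub_le (hI hs) (hI hs')
  have hΔ := abs_dilation_sub_sub_le hφ hc hs hs'
  calc |(φ (c * s) * A - φ s * B) - (φ (c * s') * A - φ s' * B)|
      = |((φ (c * s) - φ s) - (φ (c * s') - φ s')) * A + (φ s - φ s') * (A - B)| := by
        ring_nf
    _ ≤ 9 * M * |c - 1| * |s - s'| * |A| + M * |s - s'| * |A - B| := by
        refine (abs_add_le _ _).trans ?_
        rw [abs_mul, abs_mul]
        gcongr
    _ = M * (9 * |c - 1| * |A| + |A - B|) * |s - s'| := by ring

theorem eVariationOn_dilation_profile_le {φ φ' : ℝ → ℝ} {M c : ℝ}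
    (hφ : ProfileDerivBounds φ φ' M)
    (hφ0 : ∀ t : ℝ, 0 ≤ t → t < 1 / 4 → φ t = 0) (hφ1 : ∀ t : ℝ, 4 ≤ t → φ t = 1)
    (hc : c ∈ Icc (9 / 16 : ℝ) (25 / 16)) (A B : ℝ) :
    eVariationOn (fun s => φ (c * s) * A - φ s * B) (Ioi 0) ≤
      ENNReal.ofReal (8 * (M * (9 * |c - 1| * |A| + |A - B|))) := by
  have hM := hφ.nonneg
  have hc' : c ∈ Icc (1 / 2 : ℝ) 2 := ⟨by linarith [hc.1], by linarith [hc.2]⟩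
  have hlip : LipschitzOnWith (M * (9 * |c - 1| * |A| + |A - B|)).toNNReal
      (fun s => φ (c * s) * A - φ s * B) (Icc (1 / 8) 8) :=
    LipschitzOnWith.of_dist_le' fun s hs s' hs' => by
      simpa only [Real.dist_eq] using
        abs_dilation_profile_sub_le hφ hc' A B hs hs'
  have hlow : ∀ s ∈ Ioi (0 : ℝ), s ≤ 1 / 8 → φ (c * s) = 0 ∧ φ s = 0 := fun s hs hs8 =>
    ⟨hφ0 _ (by nlinarith [hc.1, hs.out]) (by nlinarith [hc.2, hs.out]),
      hφ0 _ hs.out.le (by linarith)⟩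
  have hhigh : ∀ s, 8 ≤ s → φ (c * s) = 1 ∧ φ s = 1 := fun s hs8 =>
    ⟨hφ1 _ (by nlinarith [hc.1]), hφ1 _ (by linarith)⟩
  calc eVariationOn (fun s => φ (c * s) * A - φ s * B) (Ioi 0)
      ≤ (M * (9 * |c - 1| * |A| + |A - B|)).toNNReal * ENNReal.ofReal (8 - 1 / 8) :=
        eVariationOn_le_of_lipschitzOnWith_Icc (by norm_num) hlip
          (fun s hs hs8 => by
            simp only [(hlow s hs hs8).1, (hlow s hs hs8).2,
              (hlow (1 / 8) (by norm_num) le_rfl).1, (hlow (1 / 8) (by norm_num) le_rfl).2])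
          (fun s _ hs8 => by simp only [(hhigh s hs8).1, (hhigh s hs8).2, (hhigh 8 le_rfl).1,
            (hhigh 8 le_rfl).2])
    _ ≤ ENNReal.ofReal (8 * (M * (9 * |c - 1| * |A| + |A - B|))) := by
        rw [ENNReal.ofNNReal_toNNReal, ← ENNReal.ofReal_mul (by positivity)]
        have : 0 ≤ M * (9 * |c - 1| * |A| + |A - B|) := by positivity
        exact ENNReal.ofReal_le_ofReal (by linarith)

theorem div_pow_le_two_pow_mul_div_pow {C a b : ℝ} (hC : 0 ≤ C) (hb : 0 < b) (hab : b / 2 ≤ a)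
    (k : ℕ) : C / a ^ k ≤ 2 ^ k * C / b ^ k := by
  calc C / a ^ k ≤ C / (b / 2) ^ k := by gcongr
    _ = 2 ^ k * C / b ^ k := by rw [div_pow]; field_simp

theorem AdmissibleKernel.exists_bounds_near {n d : ℕ} {K : Rd d → ℝ} (hK : AdmissibleKernel n K) :
    ∃ C : ℝ, 0 < C ∧ ∀ z w : Rd d, w ≠ 0 → ‖z - w‖ ≤ ‖w‖ / 2 →
      |K z| ≤ 2 ^ n * C / ‖w‖ ^ n ∧ |K z - K w| ≤ 2 ^ (n + 1) * C * ‖z - w‖ / ‖w‖ ^ (n + 1) := by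
  obtain ⟨C, hC, hKb⟩ := hK.bounds
  refine ⟨C, hC, fun z w hw hzw => ?_⟩
  have hw0 : 0 < ‖w‖ := norm_pos_iff.2 hw
  have hnear : ∀ v ∈ closedBall w (‖w‖ / 2), ‖w‖ / 2 ≤ ‖v‖ := fun v hv => by
    have := norm_sub_norm_le w v
    rw [mem_closedBall, dist_eq_norm, ← norm_neg, neg_sub] at hv
    linarith
  have hne : ∀ v ∈ closedBall w (‖w‖ / 2), v ≠ 0 := fun v hv =>
    norm_pos_iff.1 (by linarith [hnear v hv])
  have hz : z ∈ closedBall w (‖w‖ / 2) := by rwa [mem_closedBall, dist_eq_norm]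
  refine ⟨(hKb z (hne z hz)).1.trans
    (div_pow_le_two_pow_mul_div_pow hC.le hw0 (hnear z hz) n), ?_⟩
  have hderiv : ∀ v ∈ closedBall w (‖w‖ / 2), ‖fderiv ℝ K v‖ ≤ 2 ^ (n + 1) * C / ‖w‖ ^ (n + 1) :=
    fun v hv => (hKb v (hne v hv)).2.1.trans
      (div_pow_le_two_pow_mul_div_pow hC.le hw0 (hnear v hv) (n + 1))
  have hdiff : ∀ v ∈ closedBall w (‖w‖ / 2), DifferentiableAt ℝ K v := fun v hv =>
    (hK.smooth.differentiableOn (by norm_num)).differentiableAt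
      (isOpen_compl_singleton.mem_nhds (hne v hv))
  have := Convex.norm_image_sub_le_of_norm_fderiv_le hdiff hderiv (convex_closedBall _ _)
    (mem_closedBall_self (by positivity)) hz
  rw [Real.norm_eq_abs] at this
  exact this.trans_eq (by ring)

def truncKernel {d : ℕ} (K : Rd d → ℝ) (φ : ℝ → ℝ) (ε : ℝ) (z : Rd d) : ℝ :=
  φ (‖z‖ ^ 2 / ε ^ 2) * K z

theorem continuousOn_truncKernel {d : ℕ} {K : Rd d → ℝ} {φ : ℝ → ℝ} (hφ : ContinuousOn φ (Ici 0))
    (hK : ContinuousOn K {0}ᶜ) (ε : ℝ) : ContinuousOn (truncKernel K φ ε) {0}ᶜ :=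
  (hφ.comp_continuous (by fun_prop) fun z => mem_Ici.2 (by positivity)).continuousOn.mul hK

theorem norm_sq_div_norm_sq_mem_Icc_and_abs_sub_one_le {E : Type*} [SeminormedAddCommGroup E]
    {z w : E} {r : ℝ} (hr : 0 < r) (hzw : ‖z - w‖ ≤ r) (hw : 4 * r ≤ ‖w‖) :
    ‖z‖ ^ 2 / ‖w‖ ^ 2 ∈ Icc (9 / 16 : ℝ) (25 / 16) ∧ |‖z‖ ^ 2 / ‖w‖ ^ 2 - 1| ≤ 3 * r / ‖w‖ := by
  have hw0 : 0 < ‖w‖ := by linarith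
  have hzw' := abs_le.1 ((abs_norm_sub_norm_le z w).trans hzw)
  refine ⟨⟨?_, ?_⟩, ?_⟩
  · rw [le_div_iff₀ (by positivity)]; nlinarith
  · rw [div_le_iff₀ (by positivity)]; nlinarith
  · have hdiff : |‖z‖ ^ 2 - ‖w‖ ^ 2| ≤ 3 * r * ‖w‖ := abs_le.2 ⟨by nlinarith, by nlinarith⟩
    rw [div_sub_one (by positivity), abs_div, abs_of_pos (by positivity : (0 : ℝ) < ‖w‖ ^ 2),
      div_le_div_iff₀ (by positivity) hw0]
    nlinarith

theorem sum_abs_sub_truncKernel_sub_le {n d : ℕ} {K : Rd d → ℝ} {φ φ' : ℝ → ℝ} {C M r : ℝ}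
    (hC : 0 ≤ C)
    (hK : ∀ z w : Rd d, w ≠ 0 → ‖z - w‖ ≤ ‖w‖ / 2 →
      |K z| ≤ 2 ^ n * C / ‖w‖ ^ n ∧ |K z - K w| ≤ 2 ^ (n + 1) * C * ‖z - w‖ / ‖w‖ ^ (n + 1))
    (hφ : TruncProfile φ) (hφ' : ProfileDerivBounds φ φ' M)
    (hr : 0 < r) {z w : Rd d} (hzw : ‖z - w‖ ≤ r) (hw : 4 * r ≤ ‖w‖)
    {ε : ℤ → ℝ} (hε : Antitone ε) (hε0 : ∀ m, 0 < ε m) (t : Finset ℤ) :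
    ∑ m ∈ t, |(truncKernel K φ (ε (m + 1)) z - truncKernel K φ (ε (m + 1)) w) -
        (truncKernel K φ (ε m) z - truncKernel K φ (ε m) w)| ≤
      232 * 2 ^ n * M * C * r / ‖w‖ ^ (n + 1) := by
  have hM := hφ'.nonneg
  have hw0 : 0 < ‖w‖ := by linarith
  obtain ⟨hc, hc1⟩ := norm_sq_div_norm_sq_mem_Icc_and_abs_sub_one_le hr hzw hw
  set c := ‖z‖ ^ 2 / ‖w‖ ^ 2 with hc_def
  obtain ⟨hKz, hKzw⟩ := hK z w (norm_pos_iff.1 hw0) (by linarith)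
  set H : ℝ → ℝ := fun s => φ (c * s) * K z - φ s * K w
  have hkey : ∀ e : ℝ, truncKernel K φ e z - truncKernel K φ e w = H (‖w‖ ^ 2 / e ^ 2) := by
    intro e
    simp only [truncKernel, H, hc_def]
    rw [div_mul_div_cancel₀ (by positivity)]
  have hu : Monotone fun m => ‖w‖ ^ 2 / ε m ^ 2 := fun i j hij =>
    div_le_div_of_nonneg_left (by positivity) (pow_pos (hε0 j) 2)
      (pow_le_pow_left₀ (hε0 j).le (hε hij) 2)
  have hvar := (eVariationOn.sum_le_of_monotone_int H hu
    (fun m => div_pos (pow_pos hw0 2) (pow_pos (hε0 m) 2)) t).trans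
    (eVariationOn_dilation_profile_le hφ' hφ.eq_zero (fun _ => hφ.eq_one) hc (K z) (K w))
  simp only [edist_dist, Real.dist_eq] at hvar
  rw [← ENNReal.ofReal_sum_of_nonneg (fun _ _ => abs_nonneg _),
    ENNReal.ofReal_le_ofReal_iff (by positivity)] at hvar
  simp only [hkey]
  refine hvar.trans ?_
  calc 8 * (M * (9 * |c - 1| * |K z| + |K z - K w|))
      ≤ 8 * (M * (9 * (3 * r / ‖w‖) * (2 ^ n * C / ‖w‖ ^ n) +
          2 ^ (n + 1) * C * r / ‖w‖ ^ (n + 1))) := by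
        gcongr
        exact hKzw.trans (by gcongr)
    _ = 232 * 2 ^ n * M * C * r / ‖w‖ ^ (n + 1) := by
        field_simp
        ring

theorem integrable_of_continuousOn_of_measure_compl_eq_zero {X E : Type*} [TopologicalSpace X]
    [T2Space X] [MeasurableSpace X] [OpensMeasurableSpace X] [NormedAddCommGroup E]
    {μ : Measure X} [IsFiniteMeasure μ] {s : Set X} {f : X → E} (hs : IsCompact s)
    (hμ : μ sᶜ = 0) (hf : ContinuousOn f s) : Integrable f μ := by
  rw [← Measure.restrict_eq_self_of_ae_mem (mem_ae_iff.2 hμ)]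
  exact hf.integrableOn_compact hs

theorem integrable_truncKernel_sub_left {d : ℕ} {K : Rd d → ℝ} {φ : ℝ → ℝ}
    (hφ : ContinuousOn φ (Ici 0)) (hK : ContinuousOn K {0}ᶜ) {μ : Measure (Rd d)}
    [IsFiniteMeasure μ] {x z₀ : Rd d} {r : ℝ} (hμ : μ (ball z₀ r)ᶜ = 0) (hx : r < ‖x - z₀‖)
    (ε : ℝ) : Integrable (fun y => truncKernel K φ ε (x - y)) μ :=
  integrable_of_continuousOn_of_measure_compl_eq_zero (isCompact_closedBall z₀ r)
    (measure_mono_null (compl_subset_compl.2 ball_subset_closedBall) hμ)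
    ((continuousOn_truncKernel hφ hK ε).comp (continuous_sub_left x).continuousOn
      fun y hy => sub_ne_zero.2 (by
        rintro rfl
        rw [mem_closedBall, dist_eq_norm] at hy
        linarith))

def signedIntegral {X : Type*} [MeasurableSpace X] (ν : SignedMeasure X) (g : X → ℝ) : ℝ :=
  (∫ y, g y ∂ν.toJordanDecomposition.posPart) - ∫ y, g y ∂ν.toJordanDecomposition.negPart

section SignedIntegral

variable {X : Type*} [MeasurableSpace X] (ν : SignedMeasure X)

theorem integrable_posPart_of_integrable_totalVariation {g : X → ℝ}
    (hg : Integrable g ν.totalVariation) : Integrable g ν.toJordanDecomposition.posPart :=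
  hg.mono_measure (Measure.le_add_right le_rfl)

theorem integrable_negPart_of_integrable_totalVariation {g : X → ℝ}
    (hg : Integrable g ν.totalVariation) : Integrable g ν.toJordanDecomposition.negPart :=
  hg.mono_measure (Measure.le_add_left le_rfl)

theorem signedIntegral_sub {f g : X → ℝ} (hf : Integrable f ν.totalVariation)
    (hg : Integrable g ν.totalVariation) :
    signedIntegral ν (fun y => f y - g y) = signedIntegral ν f - signedIntegral ν g := by
  simp only [signedIntegral,
    integral_sub (integrable_posPart_of_integrable_totalVariation ν hf)
      (integrable_posPart_of_integrable_totalVariation ν hg),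
    integral_sub (integrable_negPart_of_integrable_totalVariation ν hf)
      (integrable_negPart_of_integrable_totalVariation ν hg)]
  ring

theorem signedIntegral_const (c : ℝ) : signedIntegral ν (fun _ => c) = c * ν univ := by
  have hν : ν univ = ν.toJordanDecomposition.posPart.real univ -
      ν.toJordanDecomposition.negPart.real univ := by
    conv_lhs => rw [← ν.toSignedMeasure_toJordanDecomposition]
    exact Measure.toSignedMeasure_sub_apply MeasurableSet.univ
  simp only [signedIntegral, integral_const, smul_eq_mul, hν]
  ring

theorem abs_signedIntegral_le {g : X → ℝ} (hg : Integrable g ν.totalVariation) :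
    |signedIntegral ν g| ≤ ∫ y, |g y| ∂ν.totalVariation := by
  calc |signedIntegral ν g|
      ≤ |∫ y, g y ∂ν.toJordanDecomposition.posPart| + |∫ y, g y ∂ν.toJordanDecomposition.negPart| :=
        abs_sub _ _
    _ ≤ (∫ y, |g y| ∂ν.toJordanDecomposition.posPart) +
          ∫ y, |g y| ∂ν.toJordanDecomposition.negPart :=
        add_le_add (abs_integral_le_integral_abs) (abs_integral_le_integral_abs)
    _ = ∫ y, |g y| ∂ν.totalVariation :=
        (integral_add_measure (integrable_posPart_of_integrable_totalVariation ν hg).abs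
          (integrable_negPart_of_integrable_totalVariation ν hg).abs).symm

theorem sum_abs_sub_signedIntegral_le (G : ℤ → X → ℝ) (hG : ∀ m, Integrable (G m) ν.totalVariation)
    (t : Finset ℤ) {B : ℝ} (hB : ∀ᵐ y ∂ν.totalVariation, ∑ m ∈ t, |G (m + 1) y - G m y| ≤ B) :
    ∑ m ∈ t, |signedIntegral ν (G (m + 1)) - signedIntegral ν (G m)| ≤
      B * ν.totalVariation.real univ := by
  calc ∑ m ∈ t, |signedIntegral ν (G (m + 1)) - signedIntegral ν (G m)|
      ≤ ∑ m ∈ t, ∫ y, |G (m + 1) y - G m y| ∂ν.totalVariation := by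
        gcongr with m
        rw [← signedIntegral_sub ν (hG _) (hG _)]
        exact abs_signedIntegral_le ν ((hG _).sub (hG _))
    _ = ∫ y, ∑ m ∈ t, |G (m + 1) y - G m y| ∂ν.totalVariation :=
        (integral_finsetSum t fun m _ => ((hG _).sub (hG _)).abs).symm
    _ ≤ ∫ _, B ∂ν.totalVariation :=
        integral_mono_ae (integrable_finsetSum t fun m _ => ((hG _).sub (hG _)).abs)
          (integrable_const B) hB
    _ = B * ν.totalVariation.real univ := by rw [integral_const, smul_eq_mul, mul_comm]

end SignedIntegral

theorem statement15_general (n d : ℕ) (ρ : ℝ) (hρ : 1 ≤ ρ)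
    (K : Rd d → ℝ) (hK : AdmissibleKernel n K) (φ : ℝ → ℝ) (hφ : TruncProfile φ) :
    ∃ C : ℝ, 0 < C ∧ ∀ (ν : SignedMeasure (Rd d)) (z₀ : Rd d) (r : ℝ), 0 < r →
      ν.totalVariation (ball z₀ r)ᶜ = 0 → ν Set.univ = 0 →
      ∀ x : Rd d, 4 * r ≤ dist x z₀ →
        varFam ρ (fun ε => smoothTM K φ ν ε x) ≤
          ENNReal.ofReal (C * r / dist x z₀ ^ (n + 1)) * tvNorm ν := by
  obtain ⟨C, hC, hKnear⟩ := hK.exists_bounds_near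
  obtain ⟨M, hM, hφ'⟩ := hφ.exists_profileDerivBounds
  refine ⟨232 * 2 ^ n * M * C, by positivity, fun ν z₀ r hr hsupp hmass x hx => ?_⟩
  rw [dist_eq_norm] at hx ⊢
  have hint := integrable_truncKernel_sub_left hφ.smooth.continuousOn hK.smooth.continuousOn hsupp
    (show r < ‖x - z₀‖ by linarith)
  set G : ℝ → Rd d → ℝ := fun ε y => truncKernel K φ ε (x - y) - truncKernel K φ ε (x - z₀)
  have hT : ∀ ε, smoothTM K φ ν ε x = signedIntegral ν (G ε) := fun ε => by
    rw [signedIntegral_sub ν (hint ε) (integrable_const _), signedIntegral_const, hmass,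
      mul_zero, sub_zero]
    rfl
  calc varFam ρ (fun ε => smoothTM K φ ν ε x)
      ≤ ENNReal.ofReal (232 * 2 ^ n * M * C * r / ‖x - z₀‖ ^ (n + 1) *
          ν.totalVariation.real univ) := by
        refine varFam_le_of_forall_sum_le hρ fun ε hε hε0 t => ?_
        simp only [hT, Real.norm_eq_abs]
        refine sum_abs_sub_signedIntegral_le ν (fun m => G (ε m))
          (fun m => (hint _).sub (integrable_const _)) t ?_
        filter_upwards [mem_ae_iff.2 hsupp] with y hy
        refine sum_abs_sub_truncKernel_sub_le hC.le hKnear hφ hφ' hr ?_ hx hε hε0 t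
        rw [sub_sub_sub_cancel_left, ← dist_eq_norm, dist_comm]
        exact (mem_ball.1 hy).le
    _ = ENNReal.ofReal (232 * 2 ^ n * M * C * r / ‖x - z₀‖ ^ (n + 1)) * tvNorm ν := by
        rw [ENNReal.ofReal_mul (by positivity), measureReal_def,
          ENNReal.ofReal_toReal (measure_ne_top _ _)]
        rfl

/-- If `ν` is a finite signed measure supported in `B(z₀,r)` with total
mass zero, then `V_ρ(T_φν)(x) ≲ r‖ν‖/|x−z₀|^{n+1}` for `|x−z₀| ≥ 4r`, with a constant
depending only on `n`, `d`, `K`, `φ` and `ρ`. -/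
theorem statement15 (n d : ℕ) (hn : 1 ≤ n) (hnd : n < d) (ρ : ℝ) (hρ : 1 ≤ ρ)
    (K : Rd d → ℝ) (hK : AdmissibleKernel n K) (φ : ℝ → ℝ) (hφ : TruncProfile φ) :
    ∃ C : ℝ, 0 < C ∧ ∀ (ν : SignedMeasure (Rd d)) (z₀ : Rd d) (r : ℝ), 0 < r →
      ν.totalVariation (ball z₀ r)ᶜ = 0 → ν Set.univ = 0 →
      ∀ x : Rd d, 4 * r ≤ dist x z₀ →
        varFam ρ (fun ε => smoothTM K φ ν ε x) ≤
          ENNReal.ofReal (C * r / dist x z₀ ^ (n + 1)) * tvNorm ν :=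
  statement15_general n d ρ hρ K hK φ hφ

end
end
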